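/- Let H be a real Hilbert space, let B and B̂ be bilinear forms on H that are both coercive with the same constant α > 0, and suppose there is M ≥ 0 with |B(v,w) − B̂(v,w)| ≤ M‖v‖‖w‖ for all v, w ∈ H. Let F and F̂ be continuous linear functionals on H, and suppose ū, u ∈ H satisfy B(ū, v) = F(v) and B̂(u, v) = F̂(v) for all v ∈ H. Then √(B̂(ū − u, ū − u)) ≤ α^{-1/2} ( ‖F − F̂‖ + α^{-1} M ‖F‖ ). -/
import Mathlib

lemma aux_div_bound {α x K : ℝ} (hα : 0 < α) (hx : 0 ≤ x) (hK : 0 ≤ K)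
    (h : α * x ^ 2 ≤ K * x) : x ≤ α⁻¹ * K := by
  rcases eq_or_lt_of_le hx with h0 | h0
  · rw [← h0]; positivity
  · rw [le_inv_mul_iff₀ hα]
    nlinarith

/-- Abstract Hilbert-space form of the paper's Theorem 6.1: if `B` and `B̂` are
bilinear forms on a real Hilbert space `H`, both coercive with the same constant
`α > 0`, `|B(v,w) - B̂(v,w)| ≤ M‖v‖‖w‖`, and `ū`, `u` solve the respective
variational problems with right-hand sides `F`, `F̂`, then
`√(B̂(ū-u, ū-u)) ≤ α^{-1/2} (‖F - F̂‖ + α⁻¹ M ‖F‖)`. -/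
theorem tnn_interpolation_error_estimate
    {H : Type*} [NormedAddCommGroup H] [InnerProductSpace ℝ H] [CompleteSpace H]
    (B B' : H →ₗ[ℝ] H →ₗ[ℝ] ℝ) (α : ℝ) (hα : 0 < α)
    (hBcoer : ∀ v : H, α * ‖v‖ ^ 2 ≤ B v v)
    (hB'coer : ∀ v : H, α * ‖v‖ ^ 2 ≤ B' v v)
    (M : ℝ) (hM : 0 ≤ M)
    (hdiff : ∀ v w : H, |B v w - B' v w| ≤ M * ‖v‖ * ‖w‖)
    (F F' : H →L[ℝ] ℝ) (ubar u : H)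
    (hubar : ∀ v : H, B ubar v = F v)
    (hu : ∀ v : H, B' u v = F' v) :
    Real.sqrt (B' (ubar - u) (ubar - u)) ≤
      (Real.sqrt α)⁻¹ * (‖F - F'‖ + α⁻¹ * M * ‖F‖) := by
  set e := ubar - u with he
  set C : ℝ := ‖F - F'‖ + α⁻¹ * M * ‖F‖ with hC
  have hCnn : 0 ≤ C := by positivity
  -- ‖ubar‖ ≤ α⁻¹ ‖F‖
  have hub : ‖ubar‖ ≤ α⁻¹ * ‖F‖ := by
    apply aux_div_bound hα (norm_nonneg _) (norm_nonneg _)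
    calc α * ‖ubar‖ ^ 2 ≤ B ubar ubar := hBcoer ubar
      _ = F ubar := hubar ubar
      _ ≤ ‖F‖ * ‖ubar‖ := le_trans (le_abs_self _) (F.le_opNorm ubar)
  -- key bound B' e e ≤ C ‖e‖
  have hkey : B' e e ≤ C * ‖e‖ := by
    have h1 : B' e e = (B' ubar e - B ubar e) + ((F - F') e) := by
      simp only [he, map_sub, LinearMap.sub_apply, hu, hubar,
        ContinuousLinearMap.sub_apply]
      ring
    have h2 : B' ubar e - B ubar e ≤ M * ‖ubar‖ * ‖e‖ := by
      have := hdiff ubar e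
      rw [abs_sub_comm] at this
      exact le_trans (le_abs_self _) this
    have h3 : (F - F') e ≤ ‖F - F'‖ * ‖e‖ :=
      le_trans (le_abs_self _) ((F - F').le_opNorm e)
    have h4 : M * ‖ubar‖ * ‖e‖ ≤ M * (α⁻¹ * ‖F‖) * ‖e‖ := by
      have := mul_le_mul_of_nonneg_left hub hM
      exact mul_le_mul_of_nonneg_right this (norm_nonneg _)
    rw [h1, hC]
    nlinarith [norm_nonneg (F - F'), norm_nonneg e]
  -- ‖e‖ ≤ α⁻¹ C
  have hen : ‖e‖ ≤ α⁻¹ * C :=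
    aux_div_bound hα (norm_nonneg _) hCnn (le_trans (hB'coer e) hkey)
  have hfin : B' e e ≤ α⁻¹ * C ^ 2 := by
    calc B' e e ≤ C * ‖e‖ := hkey
      _ ≤ C * (α⁻¹ * C) := mul_le_mul_of_nonneg_left hen hCnn
      _ = α⁻¹ * C ^ 2 := by ring
  calc Real.sqrt (B' e e) ≤ Real.sqrt (α⁻¹ * C ^ 2) := Real.sqrt_le_sqrt hfin
    _ = (Real.sqrt α)⁻¹ * C := by
        rw [Real.sqrt_mul (by positivity), Real.sqrt_sq hCnn, Real.sqrt_inv]
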